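/- arXiv:1706.05093 — 2 statements merged into one kernel-verified Lean document; each statement's English description precedes it below -/
import Mathlib

section
/- If f₃ is a homogeneous cubic polynomial on ℝⁿ and there exist a nonzero constant c and a homogeneous polynomial p₉ of degree 9 with c·|∇f₃|⁶ = p₉·f₃, then f₃ = a·l³ for some linear form l and constant a. -/
open MvPolynomial

/-- Squared norm of the gradient of a polynomial. -/
noncomputable def gradSq {n : ℕ} (f : MvPolynomial (Fin n) ℝ) : MvPolynomial (Fin n) ℝ :=
  ∑ i, (pderiv i f) ^ 2

/-! Choose `v` with `f v ≠ 0`. For each `x`, `t ↦ f (x + t • v)` is a real cubic with leading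
coefficient `f v`, and each of its real roots is a critical point because `∇f` vanishes wherever
`f` does. Such a cubic has a real root `r`, which is then double; the remaining linear factor has a
root that must again be `r`, so the cubic is `f v * (t - r) ^ 3`. Comparing coefficients gives
`l x ^ 3 = 27 * (f v) ^ 2 * f x`, where `l x`, the coefficient of `t ^ 2`, equals `½ D_v² f (x)`
and is therefore a linear form in `x`. -/

namespace Polynomial

theorem exists_isRoot_of_odd_natDegree {P : ℝ[X]} (hP : Odd P.natDegree) : ∃ x, P.IsRoot x := by
  by_contra! hroots
  wlog hlc : 0 ≤ P.leadingCoeff generalizing P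
  · exact this (P := -P) (by simpa using hP) (fun x hx => hroots x (by simpa using hx))
      (by rw [leadingCoeff_neg]; linarith)
  have hpos := zero_lt_eval_of_roots_lt_of_leadingCoeff_nonneg (x := 0)
    (fun y hy => (hroots y hy).elim) hlc
  have hneg := zero_lt_negOnePow_mul_eval_of_lt_roots_of_leadingCoeff_nonneg (x := 0)
    (fun y hy => (hroots y hy).elim) hlc
  rw [Int.negOnePow_odd _ (by exact_mod_cast hP)] at hneg
  push_cast at hneg
  linarith

theorem exists_eq_C_mul_X_sub_C_pow_three {P : ℝ[X]} (hP : P.natDegree = 3)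
    (hcrit : ∀ t, P.IsRoot t → P.derivative.IsRoot t) :
    ∃ r, P = C P.leadingCoeff * (X - C r) ^ 3 := by
  have hP0 : P ≠ 0 := by rintro rfl; simp at hP
  obtain ⟨r, hr⟩ := exists_isRoot_of_odd_natDegree (by rw [hP]; decide)
  obtain ⟨g, hg⟩ : (X - C r) ^ 2 ∣ P := by
    rw [← le_rootMultiplicity_iff hP0]
    exact (one_lt_rootMultiplicity_iff_isRoot hP0).2 ⟨hr, hcrit r hr⟩
  have hg0 : g ≠ 0 := by rintro rfl; simp at hg; exact hP0 hg
  have hg1 : g.natDegree = 1 := by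
    rw [hg, natDegree_mul (by simp [X_sub_C_ne_zero]) hg0, natDegree_pow, natDegree_X_sub_C] at hP
    omega
  obtain ⟨s, hs⟩ := exists_isRoot_of_odd_natDegree (by rw [hg1]; decide)
  obtain ⟨a, ha⟩ : ∃ a, g /ₘ (X - C s) = C a := ⟨_, eq_C_of_natDegree_eq_zero (by
    rw [natDegree_divByMonic _ (monic_X_sub_C s), hg1, natDegree_X_sub_C])⟩
  have hgs : g = C a * (X - C s) := by rw [← mul_divByMonic_eq_iff_isRoot.2 hs, ha, mul_comm]
  have ha0 : a ≠ 0 := by rintro rfl; simp [hgs] at hg0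
  -- `P' (s) = a * (s - r) ^ 2`
  have hsr : s = r := by
    simpa [hg, hgs, derivative_mul, ha0, sub_eq_zero] using hcrit s (by simp [hg, hs.eq_zero])
  refine ⟨r, ?_⟩
  rw [hg, hgs, hsr]
  simp only [leadingCoeff_mul, leadingCoeff_pow, leadingCoeff_X_sub_C, leadingCoeff_C, one_pow,
    one_mul, mul_one]
  ring

theorem coeff_two_pow_three_of_isRoot_derivative {P : ℝ[X]} (hP : P.natDegree = 3)
    (hcrit : ∀ t, P.IsRoot t → P.derivative.IsRoot t) :
    P.coeff 2 ^ 3 = 27 * P.leadingCoeff ^ 2 * P.coeff 0 := by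
  obtain ⟨r, hr⟩ := exists_eq_C_mul_X_sub_C_pow_three hP hcrit
  set a := P.leadingCoeff
  have hexpand :
      P = C a * X ^ 3 + C (-3 * a * r) * X ^ 2 + C (3 * a * r ^ 2) * X + C (-a * r ^ 3) := by
    rw [hr]
    simp only [map_mul, map_neg, map_pow, map_ofNat]
    ring
  rw [hexpand]
  simp only [coeff_add, coeff_C_mul, coeff_X_pow, coeff_X, coeff_C]
  norm_num
  ring

end Polynomial

namespace MvPolynomial

variable {R σ : Type*}

section CommRing

variable [CommRing R]

theorem IsHomogeneous.eval_smul [Fintype σ] {p : MvPolynomial σ R} {m : ℕ}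
    (hp : p.IsHomogeneous m) (t : R) (v : σ → R) : eval (t • v) p = t ^ m * eval v p := by
  simp only [eval_eq, Finset.mul_sum]
  refine Finset.sum_congr rfl fun d hd => ?_
  have hdeg : ∑ i ∈ d.support, d i = m := by
    rw [← hp (mem_support_iff.1 hd), Finsupp.weight_apply, Finsupp.sum]
    simp
  simp only [Pi.smul_apply, smul_eq_mul, mul_pow, Finset.prod_mul_distrib,
    Finset.prod_pow_eq_pow_sum, hdeg]
  ring

/-- `p (x + T • v)`, as a polynomial in `T` whose coefficients are polynomials in `x`. -/
noncomputable def lineRestrict (v : σ → R) :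
    MvPolynomial σ R →ₐ[R] Polynomial (MvPolynomial σ R) :=
  aeval fun i => Polynomial.C (X i) + Polynomial.C (C (v i)) * Polynomial.X

@[simp]
theorem lineRestrict_X (v : σ → R) (i : σ) :
    lineRestrict v (X i) = Polynomial.C (X i) + Polynomial.C (C (v i)) * Polynomial.X :=
  aeval_X _ _

@[simp]
theorem lineRestrict_C (v : σ → R) (r : R) : lineRestrict v (C r) = Polynomial.C (C r) :=
  aeval_C _ _

theorem coeff_zero_lineRestrict (v : σ → R) (p : MvPolynomial σ R) :
    (lineRestrict v p).coeff 0 = p := by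
  induction p using MvPolynomial.induction_on with
  | C r => simp
  | add p q hp hq => simp [hp, hq]
  | mul_X p i hp => simp [hp]

theorem eval_map_lineRestrict (v x : σ → R) (p : MvPolynomial σ R) (t : R) :
    ((lineRestrict v p).map (eval x)).eval t = eval (x + t • v) p := by
  induction p using MvPolynomial.induction_on with
  | C r => simp
  | add p q hp hq => simp [hp, hq]
  | mul_X p i hp =>
    simp [hp]
    ring

variable [Fintype σ]

noncomputable def dirDeriv (v : σ → R) : Derivation R (MvPolynomial σ R) (MvPolynomial σ R) :=
  ∑ i, v i • pderiv i

theorem dirDeriv_apply (v : σ → R) (p : MvPolynomial σ R) :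
    dirDeriv v p = ∑ i, v i • pderiv i p := by
  rw [dirDeriv, ← Derivation.coeFnAddMonoidHom_apply, map_sum, Finset.sum_apply]
  rfl

theorem eval_dirDeriv (v x : σ → R) (p : MvPolynomial σ R) :
    eval x (dirDeriv v p) = ∑ i, v i * eval x (pderiv i p) := by
  simp [dirDeriv_apply, smul_eq_C_mul]

theorem dirDeriv_X (v : σ → R) (i : σ) : dirDeriv v (X i) = C (v i) := by
  classical
  simp [dirDeriv_apply, pderiv_X, Pi.single_apply, smul_eq_C_mul]

protected theorem IsHomogeneous.dirDeriv {p : MvPolynomial σ R} {m : ℕ}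
    (hp : p.IsHomogeneous m) (v : σ → R) : (dirDeriv v p).IsHomogeneous (m - 1) := by
  rw [dirDeriv_apply]
  exact IsHomogeneous.sum _ _ _ fun i _ => by rw [smul_eq_C_mul]; exact hp.pderiv.C_mul (v i)

theorem IsHomogeneous.iterate_dirDeriv {p : MvPolynomial σ R} {m : ℕ} (hp : p.IsHomogeneous m)
    (v : σ → R) (k : ℕ) : ((dirDeriv v)^[k] p).IsHomogeneous (m - k) := by
  induction k with
  | zero => exact hp
  | succ k ih =>
    rw [Function.iterate_succ_apply', Nat.sub_succ]
    exact ih.dirDeriv v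

theorem IsHomogeneous.iterate_dirDeriv_eq_zero {p : MvPolynomial σ R} {m : ℕ}
    (hp : p.IsHomogeneous m) (v : σ → R) {k : ℕ} (hk : m < k) : (dirDeriv v)^[k] p = 0 := by
  obtain ⟨j, rfl⟩ := Nat.exists_eq_add_of_lt hk
  have hconst := hp.iterate_dirDeriv v m
  rw [Nat.sub_self, ← totalDegree_zero_iff_isHomogeneous, totalDegree_eq_zero_iff_eq_C] at hconst
  rw [show m + j + 1 = j + 1 + m by omega, Function.iterate_add_apply, hconst,
    Function.iterate_succ_apply, ← algebraMap_eq, Derivation.map_algebraMap,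
    Function.iterate_fixed (map_zero _)]

theorem derivative_lineRestrict (v : σ → R) (p : MvPolynomial σ R) :
    Polynomial.derivative (lineRestrict v p) = lineRestrict v (dirDeriv v p) := by
  induction p using MvPolynomial.induction_on with
  | C r => simp [← algebraMap_eq]
  | add p q hp hq => simp [hp, hq]
  | mul_X p i hp =>
    simp only [map_mul, Polynomial.derivative_mul, hp, Derivation.leibniz, dirDeriv_X, smul_eq_mul,
      map_add, lineRestrict_X, lineRestrict_C, Polynomial.derivative_C, Polynomial.derivative_X]
    ring

theorem coeff_lineRestrict_mul_factorial (v : σ → R) (p : MvPolynomial σ R) (k : ℕ) :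
    (lineRestrict v p).coeff k * k.factorial = (dirDeriv v)^[k] p := by
  induction k generalizing p with
  | zero => simp [coeff_zero_lineRestrict]
  | succ k ih =>
    rw [Function.iterate_succ_apply, ← ih, ← derivative_lineRestrict, Polynomial.coeff_derivative,
      Nat.factorial_succ]
    push_cast
    ring

end CommRing

section Field

variable [Field R] [CharZero R] [Fintype σ] {p : MvPolynomial σ R} {m : ℕ}

theorem coeff_lineRestrict (v : σ → R) (p : MvPolynomial σ R) (k : ℕ) :
    (lineRestrict v p).coeff k = C (k.factorial⁻¹ : R) * (dirDeriv v)^[k] p := by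
  have hk : (k.factorial : R) ≠ 0 := Nat.cast_ne_zero.2 k.factorial_ne_zero
  rw [← coeff_lineRestrict_mul_factorial, ← map_natCast C, mul_left_comm, ← C_mul,
    inv_mul_cancel₀ hk, C_1, mul_one]

theorem IsHomogeneous.isHomogeneous_coeff_lineRestrict (hp : p.IsHomogeneous m) (v : σ → R)
    (k : ℕ) : ((lineRestrict v p).coeff k).IsHomogeneous (m - k) := by
  rw [coeff_lineRestrict]
  exact (hp.iterate_dirDeriv v k).C_mul _

theorem IsHomogeneous.coeff_lineRestrict_eq_zero (hp : p.IsHomogeneous m) (v : σ → R) {k : ℕ}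
    (hk : m < k) : (lineRestrict v p).coeff k = 0 := by
  rw [coeff_lineRestrict, hp.iterate_dirDeriv_eq_zero v hk, mul_zero]

theorem IsHomogeneous.coeff_lineRestrict_self (hp : p.IsHomogeneous m) (v : σ → R) :
    (lineRestrict v p).coeff m = C (eval v p) := by
  have hconst := hp.isHomogeneous_coeff_lineRestrict v m
  rw [Nat.sub_self, ← totalDegree_zero_iff_isHomogeneous, totalDegree_eq_zero_iff_eq_C] at hconst
  have hline : (lineRestrict v p).map (eval 0) = Polynomial.C (eval v p) * Polynomial.X ^ m :=
    Polynomial.funext fun t => by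
      rw [eval_map_lineRestrict, zero_add, hp.eval_smul, Polynomial.eval_mul, Polynomial.eval_C,
        Polynomial.eval_X_pow, mul_comm]
  have hcoeff : constantCoeff ((lineRestrict v p).coeff m) = eval v p := by
    simpa [Polynomial.coeff_map] using congrArg (Polynomial.coeff · m) hline
  rw [hconst, ← hcoeff]
  rfl

theorem IsHomogeneous.natDegree_map_eval_lineRestrict (hp : p.IsHomogeneous m) {v : σ → R}
    (hv : eval v p ≠ 0) (x : σ → R) : ((lineRestrict v p).map (eval x)).natDegree = m := by
  refine Polynomial.natDegree_eq_of_le_of_coeff_ne_zero ?_ (by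
    simpa [Polynomial.coeff_map, hp.coeff_lineRestrict_self] using hv)
  exact Polynomial.natDegree_le_iff_coeff_eq_zero.2 fun k hk => by
    simp [Polynomial.coeff_map, hp.coeff_lineRestrict_eq_zero v (by exact_mod_cast hk)]

end Field

theorem IsHomogeneous.exists_eq_C_mul_pow_three_of_singular_zeros [Fintype σ]
    {f : MvPolynomial σ ℝ} (hf : f.IsHomogeneous 3)
    (hsing : ∀ x, eval x f = 0 → ∀ i, eval x (pderiv i f) = 0) :
    ∃ (a : ℝ) (l : MvPolynomial σ ℝ), l.IsHomogeneous 1 ∧ f = C a * l ^ 3 := by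
  by_cases hf0 : f = 0
  · exact ⟨0, 0, isHomogeneous_zero _ _ _, by simp [hf0]⟩
  obtain ⟨v, hv⟩ : ∃ v, eval v f ≠ 0 := by
    by_contra! h
    exact hf0 (funext_iff.2 fun x => by simp [h x])
  set l := (lineRestrict v f).coeff 2
  have hcube : ∀ x, eval x l ^ 3 = 27 * eval v f ^ 2 * eval x f := by
    intro x
    have hcrit : ∀ t, ((lineRestrict v f).map (eval x)).IsRoot t →
        ((lineRestrict v f).map (eval x)).derivative.IsRoot t := by
      intro t ht
      rw [Polynomial.IsRoot, eval_map_lineRestrict] at ht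
      simp [Polynomial.derivative_map, derivative_lineRestrict, eval_map_lineRestrict,
        eval_dirDeriv, hsing _ ht]
    simpa [Polynomial.leadingCoeff, hf.natDegree_map_eval_lineRestrict hv, Polynomial.coeff_map,
      hf.coeff_lineRestrict_self, coeff_zero_lineRestrict] using
      Polynomial.coeff_two_pow_three_of_isRoot_derivative
        (hf.natDegree_map_eval_lineRestrict hv x) hcrit
  have ha : 27 * eval v f ^ 2 ≠ 0 := by positivity
  refine ⟨(27 * eval v f ^ 2)⁻¹, l, hf.isHomogeneous_coeff_lineRestrict v 2,
    funext_iff.2 fun x => ?_⟩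
  simp [hcube]
  field_simp

end MvPolynomial

theorem eval_gradSq_eq_zero_iff {n : ℕ} {f : MvPolynomial (Fin n) ℝ} {x : Fin n → ℝ} :
    eval x (gradSq f) = 0 ↔ ∀ i, eval x (pderiv i f) = 0 := by
  simp only [gradSq, map_sum, map_pow]
  rw [Finset.sum_eq_zero_iff_of_nonneg fun i _ => sq_nonneg _]
  simp

theorem stmt_5_general (n : ℕ) (f₃ p₉ : MvPolynomial (Fin n) ℝ)
    (h3 : f₃.IsHomogeneous 3)
    (c : ℝ) (hc : c ≠ 0)
    (heq : C c * (gradSq f₃) ^ 3 = p₉ * f₃) :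
    ∃ (a : ℝ) (l : MvPolynomial (Fin n) ℝ), l.IsHomogeneous 1 ∧ f₃ = C a * l ^ 3 := by
  refine h3.exists_eq_C_mul_pow_three_of_singular_zeros fun x hx => eval_gradSq_eq_zero_iff.1 ?_
  simpa [hx, hc] using congrArg (eval x) heq

theorem stmt_5 (n : ℕ) (f₃ p₉ : MvPolynomial (Fin n) ℝ)
    (h3 : f₃.IsHomogeneous 3) (h9 : p₉.IsHomogeneous 9)
    (c : ℝ) (hc : c ≠ 0)
    (heq : C c * (gradSq f₃) ^ 3 = p₉ * f₃) :
    ∃ (a : ℝ) (l : MvPolynomial (Fin n) ℝ), l.IsHomogeneous 1 ∧ f₃ = C a * l ^ 3 :=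
  stmt_5_general n f₃ p₉ h3 c hc heq
end

section
/- Let f(x,y) = x³ + yᵗAy + k₀x² + (yᵗr)x + k₁x + yᵗs as above. Then the polynomial Δ₁f := 2|∇f|²Δf − ∇fᵗ∇|∇f|² satisfies Δ₁f − 4(tr A)|∇f|² ∈ Pol₃, i.e., it is a polynomial of total degree at most 3. -/
open MvPolynomial

/-- Laplacian of a polynomial. -/
noncomputable def lap {n : ℕ} (f : MvPolynomial (Fin n) ℝ) : MvPolynomial (Fin n) ℝ :=
  ∑ i, pderiv i (pderiv i f)

/-- Δ₁ f = 2|∇f|²Δf − ∇fᵗ∇|∇f|². -/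
noncomputable def delta1 {n : ℕ} (f : MvPolynomial (Fin n) ℝ) : MvPolynomial (Fin n) ℝ :=
  2 * gradSq f * lap f - ∑ i, pderiv i f * pderiv i (gradSq f)

/-- The cubic f(x,y) = x³ + yᵗAy + k₀x² + (yᵗr)x + k₁x + yᵗs, with x = X 0
and y = (X 1, …, X m) in `MvPolynomial (Fin (m+1)) ℝ`. -/
noncomputable def fcmc (m : ℕ) (A : Matrix (Fin m) (Fin m) ℝ) (r s : Fin m → ℝ)
    (k₀ k₁ : ℝ) : MvPolynomial (Fin (m + 1)) ℝ :=
  X 0 ^ 3 + (∑ i, ∑ j, C (A i j) * X i.succ * X j.succ) + C k₀ * X 0 ^ 2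
    + (∑ i, C (r i) * X i.succ) * X 0 + C k₁ * X 0 + ∑ i, C (s i) * X i.succ

/-!
Expanding `∂ᵢ|∇f|²` gives `Δ₁f = 2|∇f|²Δf − 2∇fᵗ(Hess f)∇f` for every polynomial `f`. For
the cubic `f` of the statement `∂_y f` is affine, so every second derivative other than `f_xx` is
constant, and `Δf = f_xx + 2 tr A`. Hence `Δ₁f − 4 (tr A)|∇f|² = 2|∇f|² f_xx − 2∇fᵗ(Hess f)∇f`,
where the only terms of degree above three, `±2 f_x² f_xx`, cancel.
-/

namespace MvPolynomial

variable {R σ : Type*}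

section CommSemiring

variable [CommSemiring R]

theorem pderiv_pderiv_comm (i k : σ) (p : MvPolynomial σ R) :
    pderiv i (pderiv k p) = pderiv k (pderiv i p) := by
  classical
  induction p using MvPolynomial.induction_on with
  | C a => simp
  | add p q hp hq => simp [hp, hq]
  | mul_X p j hp =>
    simp only [pderiv_mul, map_add, pderiv_X, hp, Pi.single_apply]
    split_ifs <;> simp only [pderiv_one, map_zero, mul_zero, mul_one, add_zero]
    all_goals ring

theorem totalDegree_pderiv_le (i : σ) (p : MvPolynomial σ R) :
    (pderiv i p).totalDegree ≤ p.totalDegree - 1 := by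
  classical
  refine Finset.sup_le fun m hm => ?_
  have hcoeff : coeff (m + Finsupp.single i 1) p ≠ 0 := by
    rw [mem_support_iff, coeff_pderiv] at hm
    exact left_ne_zero_of_mul hm
  have hdeg := le_totalDegree (mem_support_iff.mpr hcoeff)
  rw [Finsupp.sum_add_index' (fun _ => rfl) (fun _ _ _ => rfl),
    Finsupp.sum_single_index rfl] at hdeg
  omega

theorem totalDegree_add_le_of_le {p q : MvPolynomial σ R} {d : ℕ} (hp : p.totalDegree ≤ d)
    (hq : q.totalDegree ≤ d) : (p + q).totalDegree ≤ d :=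
  (totalDegree_add p q).trans (max_le hp hq)

theorem totalDegree_mul_le_of_le {p q : MvPolynomial σ R} {a b : ℕ} (hp : p.totalDegree ≤ a)
    (hq : q.totalDegree ≤ b) : (p * q).totalDegree ≤ a + b :=
  (totalDegree_mul p q).trans (add_le_add hp hq)

theorem totalDegree_sum_C_mul_X_le {ι : Type*} (s : Finset ι) (a : ι → R) (v : ι → σ) :
    (∑ i ∈ s, C (a i) * X (v i) : MvPolynomial σ R).totalDegree ≤ 1 :=
  totalDegree_finsetSum_le fun i _ => by
    simpa [C_mul_X_eq_monomial] using totalDegree_monomial_le (Finsupp.single (v i) 1) (a i)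

end CommSemiring

theorem totalDegree_sub_le_of_le [CommRing R] {p q : MvPolynomial σ R} {d : ℕ}
    (hp : p.totalDegree ≤ d) (hq : q.totalDegree ≤ d) : (p - q).totalDegree ≤ d :=
  (totalDegree_sub p q).trans (max_le hp hq)

end MvPolynomial

section Hessian

variable {n : ℕ} (f : MvPolynomial (Fin n) ℝ)

theorem pderiv_gradSq (i : Fin n) :
    pderiv i (gradSq f) = 2 * ∑ k, pderiv k f * pderiv i (pderiv k f) := by
  simp only [gradSq, map_sum, pderiv_pow, Finset.mul_sum]
  refine Finset.sum_congr rfl fun k _ => ?_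
  push_cast
  ring

theorem delta1_eq :
    delta1 f = 2 * gradSq f * lap f
      - 2 * ∑ i, ∑ k, pderiv i f * pderiv k f * pderiv i (pderiv k f) := by
  simp only [delta1, pderiv_gradSq, Finset.mul_sum]
  rw [sub_right_inj]
  refine Finset.sum_congr rfl fun i _ => Finset.sum_congr rfl fun k _ => ?_
  ring

end Hessian

theorem delta1_sub_eq {m : ℕ} (f : MvPolynomial (Fin (m + 1)) ℝ) (c : ℝ)
    (hlap : lap f = pderiv 0 (pderiv 0 f) + C c) :
    delta1 f - C (2 * c) * gradSq f = C 2 *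
      ((∑ j : Fin m, pderiv j.succ f ^ 2) * pderiv 0 (pderiv 0 f)
        - ∑ j : Fin m, pderiv 0 f * pderiv j.succ f * pderiv 0 (pderiv j.succ f)
        - ∑ j : Fin m, pderiv j.succ f * pderiv 0 f * pderiv 0 (pderiv j.succ f)
        - ∑ j : Fin m, ∑ l : Fin m,
            pderiv j.succ f * pderiv l.succ f * pderiv j.succ (pderiv l.succ f)) := by
  simp only [delta1_eq, hlap, gradSq, Fin.sum_univ_succ, Finset.sum_add_distrib,
    pderiv_pderiv_comm _ (0 : Fin (m + 1)), map_mul, map_ofNat]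
  ring

theorem totalDegree_delta1_sub_le {m : ℕ} (f : MvPolynomial (Fin (m + 1)) ℝ) (c : ℝ)
    (hf : f.totalDegree ≤ 3) (hy : ∀ j : Fin m, (pderiv j.succ f).totalDegree ≤ 1)
    (hlap : lap f = pderiv 0 (pderiv 0 f) + C c) :
    (delta1 f - C (2 * c) * gradSq f).totalDegree ≤ 3 := by
  have hx : (pderiv 0 f).totalDegree ≤ 2 := (totalDegree_pderiv_le _ _).trans (by omega)
  have hxx : (pderiv 0 (pderiv 0 f)).totalDegree ≤ 1 :=
    (totalDegree_pderiv_le _ _).trans (by omega)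
  have hxy (j : Fin m) : (pderiv 0 (pderiv j.succ f)).totalDegree ≤ 0 :=
    (totalDegree_pderiv_le _ _).trans (by have := hy j; omega)
  have hyy (j l : Fin m) : (pderiv j.succ (pderiv l.succ f)).totalDegree ≤ 0 :=
    (totalDegree_pderiv_le _ _).trans (by have := hy l; omega)
  rw [delta1_sub_eq f c hlap, ← zero_add 3]
  refine totalDegree_mul_le_of_le (totalDegree_C _).le <|
    totalDegree_sub_le_of_le (totalDegree_sub_le_of_le (totalDegree_sub_le_of_le ?_ ?_) ?_) ?_
  · exact totalDegree_mul_le_of_le (a := 2) (totalDegree_finsetSum_le fun j _ =>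
      (totalDegree_pow _ 2).trans (by have := hy j; omega)) hxx
  · exact totalDegree_finsetSum_le fun j _ =>
      totalDegree_mul_le_of_le (totalDegree_mul_le_of_le hx (hy j)) (hxy j)
  · exact totalDegree_finsetSum_le fun j _ =>
      totalDegree_mul_le_of_le (totalDegree_mul_le_of_le (hy j) hx) (hxy j)
  · exact totalDegree_finsetSum_le fun j _ => totalDegree_finsetSum_le fun l _ =>
      (totalDegree_mul_le_of_le (totalDegree_mul_le_of_le (hy j) (hy l)) (hyy j l)).trans
        (by omega)

theorem pderiv_succ_sum_C_mul_X_succ {m : ℕ} (a : Fin m → ℝ) (j : Fin m) :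
    pderiv j.succ (∑ i, C (a i) * X i.succ : MvPolynomial (Fin (m + 1)) ℝ) = C (a j) := by
  simp [pderiv_X, Pi.single_apply]

section fcmc

variable (m : ℕ) (A : Matrix (Fin m) (Fin m) ℝ) (r s : Fin m → ℝ) (k₀ k₁ : ℝ)

theorem totalDegree_fcmc_le : (fcmc m A r s k₀ k₁).totalDegree ≤ 3 := by
  have hC (a : ℝ) : (C a : MvPolynomial (Fin (m + 1)) ℝ).totalDegree ≤ 0 := (totalDegree_C a).le
  have hX (i : Fin (m + 1)) : (X i : MvPolynomial (Fin (m + 1)) ℝ).totalDegree ≤ 1 :=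
    (totalDegree_X i).le
  refine totalDegree_add_le_of_le (totalDegree_add_le_of_le (totalDegree_add_le_of_le
    (totalDegree_add_le_of_le (totalDegree_add_le_of_le ?_ ?_) ?_) ?_) ?_) ?_
  · exact (totalDegree_X_pow _ _).le
  · exact totalDegree_finsetSum_le fun i _ => totalDegree_finsetSum_le fun j _ =>
      (totalDegree_mul_le_of_le (totalDegree_mul_le_of_le (hC _) (hX _)) (hX _)).trans
        (by norm_num)
  · exact (totalDegree_mul_le_of_le (hC _) (totalDegree_X_pow _ 2).le).trans (by norm_num)
  · exact (totalDegree_mul_le_of_le (totalDegree_sum_C_mul_X_le _ _ _) (hX 0)).trans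
      (by norm_num)
  · exact (totalDegree_mul_le_of_le (hC _) (hX 0)).trans (by norm_num)
  · exact (totalDegree_sum_C_mul_X_le _ _ _).trans (by norm_num)

theorem pderiv_succ_fcmc (j : Fin m) :
    pderiv j.succ (fcmc m A r s k₀ k₁)
      = ∑ i, C (A j i + A i j) * X i.succ + C (r j) * X 0 + C (s j) := by
  simp only [fcmc, map_add, Derivation.leibniz_pow, Nat.add_one_sub_one, pderiv_X, ne_eq,
    Fin.succ_ne_zero, not_false_eq_true, Pi.single_eq_of_ne', smul_eq_mul, mul_zero, nsmul_zero,
    map_sum, Derivation.leibniz, Pi.single_apply, Fin.succ_inj, mul_ite, mul_one, derivation_C,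
    add_zero, Finset.sum_add_distrib, Finset.sum_ite_eq', Finset.mem_univ, ↓reduceIte,
    Finset.sum_ite_irrel, Finset.sum_const_zero, zero_add, pow_one, add_mul, add_left_inj]
  simp only [mul_comm (X _)]
  ring

theorem totalDegree_pderiv_succ_fcmc_le (j : Fin m) :
    (pderiv j.succ (fcmc m A r s k₀ k₁)).totalDegree ≤ 1 := by
  rw [pderiv_succ_fcmc]
  refine totalDegree_add_le_of_le (totalDegree_add_le_of_le
    (totalDegree_sum_C_mul_X_le _ _ _) ?_) ((totalDegree_C _).trans_le zero_le_one)
  exact (totalDegree_mul_le_of_le (totalDegree_C _).le (totalDegree_X _).le).trans_eq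
    (zero_add 1)

theorem lap_fcmc :
    lap (fcmc m A r s k₀ k₁) = pderiv 0 (pderiv 0 (fcmc m A r s k₀ k₁)) + C (2 * A.trace) := by
  rw [lap, Fin.sum_univ_succ]
  simp only [pderiv_succ_fcmc, Derivation.map_add, pderiv_succ_sum_C_mul_X_succ, pderiv_C_mul,
    pderiv_C, pderiv_X_of_ne (Fin.succ_ne_zero _).symm, mul_zero, add_zero, ← two_mul,
    ← map_sum]
  simp [Matrix.trace, Finset.mul_sum]

end fcmc

theorem stmt_8_general (m : ℕ) (A : Matrix (Fin m) (Fin m) ℝ)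
    (r s : Fin m → ℝ) (k₀ k₁ : ℝ) :
    (delta1 (fcmc m A r s k₀ k₁)
      - C (4 * A.trace) * gradSq (fcmc m A r s k₀ k₁)).totalDegree ≤ 3 := by
  have h := totalDegree_delta1_sub_le (fcmc m A r s k₀ k₁) (2 * A.trace)
    (totalDegree_fcmc_le m A r s k₀ k₁) (totalDegree_pderiv_succ_fcmc_le m A r s k₀ k₁)
    (lap_fcmc m A r s k₀ k₁)
  rwa [← mul_assoc, show (2 : ℝ) * 2 = 4 by norm_num] at h

theorem stmt_8 (m : ℕ) (A : Matrix (Fin m) (Fin m) ℝ) (hA : A.IsSymm)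
    (r s : Fin m → ℝ) (k₀ k₁ : ℝ) :
    (delta1 (fcmc m A r s k₀ k₁)
      - C (4 * A.trace) * gradSq (fcmc m A r s k₀ k₁)).totalDegree ≤ 3 :=
  stmt_8_general m A r s k₀ k₁
end
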